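/- Any finitely generated one-ended group with exponential growth and linear divergence admits exponentially many fat bigons (in any Cayley graph with respect to a finite symmetric generating set). -/

import Mathlib

open SimpleGraph

/-- A graph has uniformly bounded degree if there is a uniform finite bound on
the cardinality of all neighbour sets. -/
def BddDegree {V : Type*} (G : SimpleGraph V) : Prop :=
  ∃ D : ℕ, ∀ v : V, (G.neighborSet v).encard ≤ D

/-- A walk is geodesic if its length realizes the graph distance between its endpoints. -/
def SimpleGraph.Walk.IsGeodesic {V : Type*} {G : SimpleGraph V} {x y : V}
    (w : G.Walk x y) : Prop :=
  w.length = G.dist x y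

/-- A graph is `δ`-hyperbolic if each side of every geodesic triangle is contained in the
closed `δ`-neighbourhood of the union of the other two sides. -/
def GraphHyperbolic {V : Type*} (G : SimpleGraph V) (δ : ℝ) : Prop :=
  ∀ ⦃a b c : V⦄ (γ₁ : G.Walk a b) (γ₂ : G.Walk b c) (γ₃ : G.Walk c a),
    γ₁.IsGeodesic → γ₂.IsGeodesic → γ₃.IsGeodesic →
      ∀ u ∈ γ₁.support, ∃ v, (v ∈ γ₂.support ∨ v ∈ γ₃.support) ∧ (G.dist u v : ℝ) ≤ δ

/-- `x` admits an `(L,s,C)`-bigon with respect to the basepoint `x₀`: two paths from `x₀`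
to `x`, each of length at most `L·d(x₀,x)`, such that any vertex of the first path outside
the `C`-neighbourhood of `{x₀, x}` is at distance more than `s` from any vertex of the
second path outside that neighbourhood. -/
def IsBigonAt {V : Type*} (G : SimpleGraph V) (x₀ : V) (L s C : ℝ) (x : V) : Prop :=
  ∃ α₁ α₂ : G.Walk x₀ x,
    ((α₁.length : ℝ) ≤ L * G.dist x₀ x) ∧ ((α₂.length : ℝ) ≤ L * G.dist x₀ x) ∧
    ∀ u ∈ α₁.support, ∀ v ∈ α₂.support,
      (C < (G.dist x₀ u : ℝ) ∧ C < (G.dist x u : ℝ)) →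
      (C < (G.dist x₀ v : ℝ) ∧ C < (G.dist x v : ℝ)) →
      s < (G.dist u v : ℝ)

/-- The set `B^X(L,s,C)` of vertices admitting an `(L,s,C)`-bigon. -/
def bigonSet {V : Type*} (G : SimpleGraph V) (x₀ : V) (L s C : ℝ) : Set V :=
  {x | IsBigonAt G x₀ L s C x}

/-- The closed ball of radius `n` about `x` in the graph metric. -/
def gBall {V : Type*} (G : SimpleGraph V) (x : V) (n : ℕ) : Set V :=
  {v | G.dist x v ≤ n}

/-- `X` has exponentially many fat bigons at `x₀`. -/
def HasExpManyFatBigons {V : Type*} (G : SimpleGraph V) (x₀ : V) : Prop :=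
  ∃ s₀ c L : ℝ, 0 ≤ s₀ ∧ 1 < c ∧ 1 < L ∧
    ∀ s : ℝ, s₀ ≤ s → ∃ C : ℝ, 0 ≤ C ∧
      {n : ℕ | (c ^ n : ℝ) ≤ ((bigonSet G x₀ L s C ∩ gBall G x₀ n).ncard : ℝ)}.Infinite

/-- `X` has no fat bigons at `x₀`. -/
def HasNoFatBigons {V : Type*} (G : SimpleGraph V) (x₀ : V) : Prop :=
  ∀ L : ℝ, 1 ≤ L → ∃ s : ℝ, 0 ≤ s ∧ ∀ C : ℝ, 0 ≤ C →
    ∃ R : ℕ, ∀ x ∈ bigonSet G x₀ L s C, G.dist x₀ x ≤ R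

/-- A coarse embedding of the graph `G` into the graph `H`, with multiplicative constant `K`
and compression function `ρ`. -/
def IsCoarseEmbedding {V W : Type*} (G : SimpleGraph V) (H : SimpleGraph W)
    (f : V → W) (K : ℝ) (ρ : ℕ → ℕ) : Prop :=
  1 ≤ K ∧ Filter.Tendsto ρ Filter.atTop Filter.atTop ∧
    ∀ x y : V, (ρ (G.dist x y) : ℝ) ≤ (H.dist (f x) (f y) : ℝ) ∧
      (H.dist (f x) (f y) : ℝ) ≤ K * (G.dist x y : ℝ)

/-- The Cayley graph of a group with respect to a (symmetric) set `S`. -/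
def cayleyGraph (G : Type*) [Group G] (S : Set G) : SimpleGraph G :=
  SimpleGraph.fromRel (fun x y => x⁻¹ * y ∈ S)

/-- The Cayley graph of `G` w.r.t. the basepoint `1` has exponential growth:
`|B_n(1)|^(1/n)` converges to a limit `> 1`. -/
def HasExpGrowth {V : Type*} (G : SimpleGraph V) (x₀ : V) : Prop :=
  ∃ a : ℝ, 1 < a ∧
    Filter.Tendsto (fun n : ℕ => ((gBall G x₀ n).ncard : ℝ) ^ ((n : ℝ)⁻¹))
      Filter.atTop (nhds a)

/-- `Div_X(n) ≤ M`: for all vertices `a b` with `d(a,b) ≤ n` and every `c ∉ {a, b}`, there is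
a path from `a` to `b` of length at most `M` avoiding the ball around `c` of radius
`(1/2)·d(c,{a,b}) − 2`. -/
def DivLE {V : Type*} (G : SimpleGraph V) (n : ℕ) (M : ℝ) : Prop :=
  ∀ a b c : V, G.dist a b ≤ n → c ≠ a → c ≠ b →
    ∃ w : G.Walk a b, (w.length : ℝ) ≤ M ∧
      ∀ u ∈ w.support, ((min (G.dist c a) (G.dist c b) : ℝ)) / 2 - 2 < (G.dist c u : ℝ)

/-- A group (given as a graph) is one-ended. -/
def OneEnded {V : Type*} (G : SimpleGraph V) : Prop :=
  ∃! e, e ∈ G.end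

/-!
Cut a geodesic from `1` to an element `g` of length `d ≈ 4n` at its midpoint `u`, and a
geodesic from `1` to `u⁻¹ g` at distance about `d / 4` from `1`, at `x`; then
`g = u * x * h` with `|u| ≈ 2n`, `|x| ≤ n` and `|h| ≈ n`. After translation by `u⁻¹` the points
`u⁻¹, 1, x, u⁻¹ g` lie on a geodesic in this order, and the geodesic `[1, x]` together with
the path `[1, u⁻¹]`, a divergence detour from `u⁻¹` to `u⁻¹ g` of linear length avoiding the
ball of radius about `d / 4` around `1`, and `[u⁻¹ g, x]` form a fat bigon at `x`. Hence
`B_{4n} ⊆ B_{2n} · (bigon points in B_n) · B_n` up to additive constants, and since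
`|B_N| = exp ((1 + o(1)) ℓ N)` with `ℓ` the logarithm of the growth rate, there are at least
`exp (ℓ n / 4)` bigon points in `B_n`.
-/

namespace SimpleGraph

variable {V W : Type*} {X : SimpleGraph V}

theorem Iso.dist_le {Y : SimpleGraph W} (f : X ≃g Y) (x y : V) :
    Y.dist (f x) (f y) ≤ X.dist x y := by
  by_cases h : X.Reachable x y
  · obtain ⟨p, hp⟩ := h.exists_walk_length_eq_dist
    calc Y.dist (f x) (f y) ≤ (p.map f.toHom).length := SimpleGraph.dist_le _
      _ = X.dist x y := by rw [Walk.length_map, hp]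
  · rw [dist_eq_zero_of_not_reachable h, dist_eq_zero_of_not_reachable (mt Iso.reachable_iff.1 h)]

theorem Iso.dist_eq {Y : SimpleGraph W} (f : X ≃g Y) (x y : V) :
    Y.dist (f x) (f y) = X.dist x y :=
  (f.dist_le x y).antisymm (by simpa using f.symm.dist_le (f x) (f y))

theorem Walk.dist_add_dist_le_length {a b u : V} (p : X.Walk a b) (hu : u ∈ p.support) :
    X.dist a u + X.dist u b ≤ p.length := by
  classical
  rw [← congrArg Walk.length (p.take_spec hu), Walk.length_append]
  exact Nat.add_le_add (dist_le _) (dist_le _)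

theorem Connected.dist_add_dist_of_length_eq (hc : X.Connected) {a b u : V} (p : X.Walk a b)
    (hp : p.length = X.dist a b) (hu : u ∈ p.support) :
    X.dist a u + X.dist u b = X.dist a b :=
  (hp ▸ p.dist_add_dist_le_length hu).antisymm hc.dist_triangle

theorem Connected.exists_dist_eq_of_le_dist (hc : X.Connected) {a b : V} {t : ℕ}
    (ht : t ≤ X.dist a b) : ∃ u, X.dist a u = t ∧ t + X.dist u b = X.dist a b := by
  obtain ⟨p, hp⟩ := hc.exists_walk_length_eq_dist a b
  have h₁ : X.dist a (p.getVert t) ≤ t := (dist_le (p.take t)).trans (by simp)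
  have h₂ : X.dist (p.getVert t) b ≤ p.length - t := (dist_le (p.drop t)).trans (by simp)
  have h₃ : X.dist a b ≤ X.dist a (p.getVert t) + X.dist (p.getVert t) b := hc.dist_triangle
  exact ⟨p.getVert t, by omega, by omega⟩

theorem Connected.dist_le_dist_of_collinear (hc : X.Connected) {w o x u v : V}
    (hwx : X.dist w x = X.dist w o + X.dist o x) (hu : X.dist o u + X.dist u x = X.dist o x)
    (hv : X.dist o v + X.dist v w = X.dist o w) : X.dist o v ≤ X.dist u v := by
  have h₁ : X.dist w x ≤ X.dist w v + X.dist v x := hc.dist_triangle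
  have h₂ : X.dist v x ≤ X.dist v u + X.dist u x := hc.dist_triangle
  rw [dist_comm (u := w) (v := o), dist_comm (u := w) (v := v), dist_comm (u := v) (v := u)] at *
  omega

end SimpleGraph

section Graph

variable {V : Type*} {X : SimpleGraph V}

theorem finite_gBall (hc : X.Connected) (hfin : ∀ v, (X.neighborSet v).Finite) (x : V) (N : ℕ) :
    (gBall X x N).Finite := by
  induction N with
  | zero =>
    refine (Set.finite_singleton x).subset fun v hv => ?_
    exact (hc.dist_eq_zero_iff.1 (Nat.le_zero.1 hv)).symm
  | succ N ih =>
    refine (ih.union (ih.biUnion fun v _ => hfin v)).subset fun v hv => ?_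
    by_cases hvN : X.dist x v ≤ N
    · exact Or.inl hvN
    obtain ⟨u, hxu, hux⟩ := hc.exists_dist_eq_of_le_dist (le_of_not_ge hvN)
    have hv : X.dist x v ≤ N + 1 := hv
    have huv : X.dist u v = 1 := by omega
    exact Or.inr (Set.mem_biUnion hxu.le (dist_eq_one_iff_adj.1 huv))

theorem ncard_gBall_pos (hc : X.Connected) (hfin : ∀ v, (X.neighborSet v).Finite) (x : V)
    (N : ℕ) : 0 < (gBall X x N).ncard :=
  (Set.ncard_pos (finite_gBall hc hfin x N)).2 ⟨x, by simp [gBall]⟩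

theorem isBigonAt_self {x₀ : V} {L s C : ℝ} (hC : 0 ≤ C) : IsBigonAt X x₀ L s C x₀ :=
  ⟨.nil, .nil, by simp, by simp, by simp [hC.not_gt]⟩

theorem DivLE.mono {n : ℕ} {M M' : ℝ} (h : DivLE X n M) (hM : M ≤ M') : DivLE X n M' :=
  fun a b c hab hca hcb =>
    let ⟨w, hw, hfar⟩ := h a b c hab hca hcb
    ⟨w, hw.trans hM, hfar⟩

theorem isBigonAt_of_detour (hc : X.Connected) {o w x y : V} {L s : ℝ} (hL : 1 ≤ L)
    (hcol : X.dist w y = X.dist w o + X.dist o x + X.dist x y) (T : X.Walk w y)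
    (hT : ∀ v ∈ T.support, (min (X.dist o w) (X.dist o y) : ℝ) / 2 - 2 < X.dist o v)
    (hfar : 2 * (X.dist o x : ℝ) + 2 * s + 4 ≤ min (X.dist o w : ℝ) (X.dist o y))
    (hlen : (X.dist o w + T.length + X.dist x y : ℝ) ≤ L * X.dist o x) :
    IsBigonAt X o L s s x := by
  have hwx : X.dist w x ≤ X.dist w o + X.dist o x := hc.dist_triangle
  have hoy : X.dist o y ≤ X.dist o x + X.dist x y := hc.dist_triangle
  have hwy₁ : X.dist w y ≤ X.dist w x + X.dist x y := hc.dist_triangle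
  have hwy₂ : X.dist w y ≤ X.dist w o + X.dist o y := hc.dist_triangle
  obtain ⟨α, hα⟩ := hc.exists_walk_length_eq_dist o x
  obtain ⟨γw, hγw⟩ := hc.exists_walk_length_eq_dist o w
  obtain ⟨γy, hγy⟩ := hc.exists_walk_length_eq_dist y x
  refine ⟨α, γw.append (T.append γy), ?_, ?_, ?_⟩
  · rw [hα]
    exact le_mul_of_one_le_left (Nat.cast_nonneg _) hL
  · simpa [hγw, hγy, dist_comm (u := y), add_assoc] using hlen
  intro u hu v hv hu_far hv_far
  have hu' := hc.dist_add_dist_of_length_eq α hα hu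
  simp only [Walk.mem_support_append_iff] at hv
  rcases hv with hv | hv | hv
  · have hov := hc.dist_le_dist_of_collinear (by omega) hu'
      (hc.dist_add_dist_of_length_eq γw hγw hv)
    exact hv_far.1.trans_le (by exact_mod_cast hov)
  · have htri : X.dist o v ≤ X.dist o u + X.dist u v := hc.dist_triangle
    have : (X.dist o v : ℝ) ≤ X.dist o u + X.dist u v := by exact_mod_cast htri
    have : (X.dist o u : ℝ) ≤ X.dist o x := by exact_mod_cast (by omega : X.dist o u ≤ X.dist o x)
    linarith [hT v hv]
  · have hv' := hc.dist_add_dist_of_length_eq γy hγy hv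
    have hxv := hc.dist_le_dist_of_collinear (w := y) (o := x) (x := o) (u := u) (v := v)
      (by rw [dist_comm (u := y) (v := o), dist_comm (u := y) (v := x), dist_comm (u := x) (v := o)]
          omega)
      (by rw [dist_comm (u := x) (v := u), dist_comm (u := u) (v := o),
            dist_comm (u := x) (v := o)]; omega)
      (by rw [dist_comm (u := x) (v := y), dist_comm (u := x) (v := v),
            dist_comm (u := v) (v := y)]; omega)
    exact hv_far.2.trans_le (by exact_mod_cast hxv)

end Graph

open scoped Pointwise in
theorem Set.ncard_mul_le {G : Type*} [Group G] (s t : Set G) :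
    (s * t).ncard ≤ s.ncard * t.ncard := by
  simpa only [Nat.card_coe_set_eq] using Set.natCard_mul_le (s := s) (t := t)

open Filter Topology in
theorem eventually_mul_le_log_and_log_le_mul {b : ℕ → ℝ} {a r R : ℝ} (hb : ∀ N, 0 < b N)
    (ha : 0 < a) (hr : r < Real.log a) (hR : Real.log a < R)
    (h : Tendsto (fun N : ℕ => b N ^ (N : ℝ)⁻¹) atTop (𝓝 a)) :
    ∀ᶠ N : ℕ in atTop, r * N ≤ Real.log (b N) ∧ Real.log (b N) ≤ R * N := by
  have hlog : Tendsto (fun N : ℕ => Real.log (b N) / N) atTop (𝓝 (Real.log a)) :=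
    (h.log ha.ne').congr fun N => by rw [Real.log_rpow (hb N), inv_mul_eq_div]
  filter_upwards [hlog.eventually (lt_mem_nhds hr), hlog.eventually (gt_mem_nhds hR),
    eventually_gt_atTop 0] with N hrN hRN hN
  have hN' : (0 : ℝ) < N := Nat.cast_pos.2 hN
  exact ⟨((lt_div_iff₀ hN').1 hrN).le, ((div_lt_iff₀ hN').1 hRN).le⟩

section Cayley

variable {G : Type*} [Group G] {S : Set G}

def cayleyGraphMulLeft (S : Set G) (g : G) : cayleyGraph G S ≃g cayleyGraph G S where
  toEquiv := Equiv.mulLeft g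
  map_rel_iff' := by simp [cayleyGraph, mul_assoc]

theorem cayleyGraph_dist_mul_left (g x y : G) :
    (cayleyGraph G S).dist (g * x) (g * y) = (cayleyGraph G S).dist x y :=
  (cayleyGraphMulLeft S g).dist_eq x y

theorem cayleyGraph_reachable_mul_left (g : G) {x y : G} (h : (cayleyGraph G S).Reachable x y) :
    (cayleyGraph G S).Reachable (g * x) (g * y) :=
  (cayleyGraphMulLeft S g).reachable_iff.2 h

theorem cayleyGraph_connected (hS : Subgroup.closure S = ⊤) : (cayleyGraph G S).Connected := by
  have hreach (g : G) : (cayleyGraph G S).Reachable 1 g := by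
    induction (hS ▸ Subgroup.mem_top g : g ∈ Subgroup.closure S) using
      Subgroup.closure_induction with
    | mem x hx =>
      by_cases hx₁ : x = 1
      · rw [hx₁]
      · exact Adj.reachable ⟨Ne.symm hx₁, Or.inl (by simpa using hx)⟩
    | one => rfl
    | mul x y _ _ hx hy => exact hx.trans (by simpa using cayleyGraph_reachable_mul_left x hy)
    | inv x _ hx => simpa using (cayleyGraph_reachable_mul_left x⁻¹ hx).symm
  exact ⟨fun u v => by simpa using cayleyGraph_reachable_mul_left u (hreach (u⁻¹ * v))⟩

theorem cayleyGraph_neighborSet_finite (hS : S.Finite) (v : G) :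
    ((cayleyGraph G S).neighborSet v).Finite := by
  refine ((hS.union hS.inv).image (v * ·)).subset ?_
  rintro u ⟨-, hu | hu⟩
  · exact ⟨v⁻¹ * u, Or.inl hu, by simp⟩
  · exact ⟨v⁻¹ * u, Or.inr (by simpa using hu), by simp⟩

open scoped Pointwise in
theorem mem_gBall_mul_bigonSet_mul_gBall (hc : (cayleyGraph G S).Connected) {C : ℝ}
    (hC : 0 ≤ C) (hdiv : ∀ n : ℕ, DivLE (cayleyGraph G S) n (C * n)) {s : ℝ} {σ n : ℕ}
    (hsσ : s ≤ σ) {g : G} (hg₀ : 8 * σ + 32 ≤ (cayleyGraph G S).dist 1 g)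
    (hg : (cayleyGraph G S).dist 1 g ≤ 2 * (2 * n + 2 * σ + 4)) :
    g ∈ gBall (cayleyGraph G S) 1 (2 * n + 2 * σ + 4) *
      (bigonSet (cayleyGraph G S) 1 (8 * (C + 1)) s s ∩ gBall (cayleyGraph G S) 1 n) *
      gBall (cayleyGraph G S) 1 (n + 2 * σ + 6) := by
  set X := cayleyGraph G S
  set d := X.dist 1 g
  obtain ⟨u, hu, hug⟩ := hc.exists_dist_eq_of_le_dist (Nat.div_le_self d 2)
  have hy : X.dist 1 (u⁻¹ * g) = X.dist u g := by
    simpa using cayleyGraph_dist_mul_left u⁻¹ u g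
  obtain ⟨x, hx, hxy⟩ :=
    hc.exists_dist_eq_of_le_dist (t := (d / 2 - 2 * σ - 4) / 2) (by rw [hy]; omega)
  have hw : X.dist 1 u⁻¹ = d / 2 := by
    rw [← hu, SimpleGraph.dist_comm (u := 1) (v := u)]
    simpa using (cayleyGraph_dist_mul_left (S := S) u 1 u⁻¹).symm
  have hwy : X.dist u⁻¹ (u⁻¹ * g) = d := by simpa using cayleyGraph_dist_mul_left u⁻¹ 1 g
  have hh : X.dist 1 (x⁻¹ * (u⁻¹ * g)) = X.dist x (u⁻¹ * g) := by
    simpa using cayleyGraph_dist_mul_left x⁻¹ x (u⁻¹ * g)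
  have hne (v : G) (hv : X.dist 1 v ≠ 0) : 1 ≠ v := fun h => hv (h ▸ dist_self)
  obtain ⟨T, hT, hTfar⟩ :=
    hdiv d u⁻¹ (u⁻¹ * g) 1 hwy.le (hne _ (by omega)) (hne _ (by omega))
  have hfar : 2 * (X.dist 1 x : ℝ) + 2 * s + 4 ≤ min (X.dist 1 u⁻¹ : ℝ) (X.dist 1 (u⁻¹ * g)) := by
    have h₁ : 2 * X.dist 1 x + 2 * σ + 4 ≤ X.dist 1 u⁻¹ := by omega
    have h₂ : 2 * X.dist 1 x + 2 * σ + 4 ≤ X.dist 1 (u⁻¹ * g) := by omega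
    rify at h₁ h₂
    exact le_min (by linarith) (by linarith)
  have hlen : (X.dist 1 u⁻¹ + T.length + X.dist x (u⁻¹ * g) : ℝ) ≤ 8 * (C + 1) * X.dist 1 x := by
    have h₁ : X.dist 1 u⁻¹ + X.dist x (u⁻¹ * g) ≤ d := by omega
    have h₂ : d ≤ 8 * X.dist 1 x := by omega
    rify at h₁ h₂
    nlinarith
  have hbig : IsBigonAt X 1 (8 * (C + 1)) s s x :=
    isBigonAt_of_detour hc (by linarith)
      (by rw [hwy, SimpleGraph.dist_comm (u := u⁻¹), hw]; omega) T hTfar hfar hlen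
  refine ⟨u * x, ⟨u, ?_, x, ⟨hbig, ?_⟩, rfl⟩, x⁻¹ * (u⁻¹ * g), ?_, by group⟩
  · show X.dist 1 u ≤ _
    omega
  · show X.dist 1 x ≤ _
    omega
  · show X.dist 1 _ ≤ _
    omega

open scoped Pointwise in
theorem gBall_subset_gBall_mul_bigonSet_mul_gBall (hc : (cayleyGraph G S).Connected) {C : ℝ}
    (hC : 0 ≤ C) (hdiv : ∀ n : ℕ, DivLE (cayleyGraph G S) n (C * n)) {s : ℝ} {σ n : ℕ}
    (hs : 0 ≤ s) (hsσ : s ≤ σ) (hn : 3 * σ + 14 ≤ n) :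
    gBall (cayleyGraph G S) 1 (2 * (2 * n + 2 * σ + 4)) ⊆
      gBall (cayleyGraph G S) 1 (2 * n + 2 * σ + 4) *
        (bigonSet (cayleyGraph G S) 1 (8 * (C + 1)) s s ∩ gBall (cayleyGraph G S) 1 n) *
        gBall (cayleyGraph G S) 1 (n + 2 * σ + 6) := by
  intro g hg
  by_cases hg₀ : 8 * σ + 32 ≤ (cayleyGraph G S).dist 1 g
  · exact mem_gBall_mul_bigonSet_mul_gBall hc hC hdiv hsσ hg₀ hg
  · have hg₀ : (cayleyGraph G S).dist 1 g ≤ 2 * n + 2 * σ + 4 := by omega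
    exact ⟨g * 1, ⟨g, hg₀, 1, ⟨isBigonAt_self hs, by simp [gBall]⟩, rfl⟩, 1,
      by simp [gBall], by simp⟩

open scoped Pointwise in
theorem ncard_gBall_le_mul_ncard_bigonSet (hS : S.Finite) (hc : (cayleyGraph G S).Connected)
    {C : ℝ} (hC : 0 ≤ C) (hdiv : ∀ n : ℕ, DivLE (cayleyGraph G S) n (C * n)) {s : ℝ} {σ n : ℕ}
    (hs : 0 ≤ s) (hsσ : s ≤ σ) (hn : 3 * σ + 14 ≤ n) :
    (gBall (cayleyGraph G S) 1 (2 * (2 * n + 2 * σ + 4))).ncard ≤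
      (gBall (cayleyGraph G S) 1 (2 * n + 2 * σ + 4)).ncard *
        (bigonSet (cayleyGraph G S) 1 (8 * (C + 1)) s s ∩ gBall (cayleyGraph G S) 1 n).ncard *
        (gBall (cayleyGraph G S) 1 (n + 2 * σ + 6)).ncard := by
  have hball := finite_gBall hc (cayleyGraph_neighborSet_finite hS) 1
  calc _ ≤ _ := Set.ncard_le_ncard (gBall_subset_gBall_mul_bigonSet_mul_gBall hc hC hdiv hs hsσ hn)
        (((hball _).mul ((hball n).subset Set.inter_subset_right)).mul (hball _))
    _ ≤ _ := (Set.ncard_mul_le _ _).trans (Nat.mul_le_mul_right _ (Set.ncard_mul_le _ _))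

theorem exp_mul_le_ncard_bigonSet_inter_gBall (hS : S.Finite)
    (hc : (cayleyGraph G S).Connected) {C : ℝ} (hC : 0 ≤ C)
    (hdiv : ∀ n : ℕ, DivLE (cayleyGraph G S) n (C * n)) {ℓ : ℝ} (hℓ : 0 < ℓ) {N₀ : ℕ}
    (hgrowth : ∀ N, N₀ ≤ N →
      9 / 10 * ℓ * N ≤ Real.log (gBall (cayleyGraph G S) 1 N).ncard ∧
        Real.log (gBall (cayleyGraph G S) 1 N).ncard ≤ 11 / 10 * ℓ * N)
    {s : ℝ} {σ n : ℕ} (hs : 0 ≤ s) (hsσ : s ≤ σ) (hn : N₀ + 16 * σ + 76 ≤ n) :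
    Real.exp (ℓ / 4) ^ n ≤
      (bigonSet (cayleyGraph G S) 1 (8 * (C + 1)) s s ∩ gBall (cayleyGraph G S) 1 n).ncard := by
  set t : ℝ :=
    ((bigonSet (cayleyGraph G S) 1 (8 * (C + 1)) s s ∩ gBall (cayleyGraph G S) 1 n).ncard : ℝ)
  set β : ℕ → ℝ := fun N => ((gBall (cayleyGraph G S) 1 N).ncard : ℝ)
  have hβ (N : ℕ) : 0 < β N :=
    Nat.cast_pos.2 (ncard_gBall_pos hc (cayleyGraph_neighborSet_finite hS) 1 N)
  have hcount : β (2 * (2 * n + 2 * σ + 4)) ≤ β (2 * n + 2 * σ + 4) * t * β (n + 2 * σ + 6) := by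
    have := ncard_gBall_le_mul_ncard_bigonSet hS hc hC hdiv hs hsσ (n := n) (by omega)
    simp only [β, t]
    exact_mod_cast this
  have ht : 0 < t :=
    pos_of_mul_pos_right (pos_of_mul_pos_left ((hβ _).trans_le hcount) (hβ _).le) (hβ _).le
  have hlog : Real.log (β (2 * (2 * n + 2 * σ + 4))) ≤
      Real.log (β (2 * n + 2 * σ + 4)) + Real.log t + Real.log (β (n + 2 * σ + 6)) := by
    rw [← Real.log_mul (hβ _).ne' ht.ne', ← Real.log_mul (mul_pos (hβ _) ht).ne' (hβ _).ne']
    exact Real.log_le_log (hβ _) hcount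
  have h₁ := (hgrowth (2 * (2 * n + 2 * σ + 4)) (by omega)).1
  have h₂ := (hgrowth (2 * n + 2 * σ + 4) (by omega)).2
  have h₃ := (hgrowth (n + 2 * σ + 6) (by omega)).2
  have hn' : (16 * σ + 76 : ℝ) ≤ n := by exact_mod_cast (by omega : 16 * σ + 76 ≤ n)
  -- `(9/5) M - (11/10) (M + n + 2σ + 6) ≥ n/4` for `M = 2n + 2σ + 4` and `n ≥ 16σ + 76`
  have hmain : n * (ℓ / 4) ≤ Real.log t := by
    push_cast at h₁ h₂ h₃
    nlinarith
  calc Real.exp (ℓ / 4) ^ n = Real.exp (n * (ℓ / 4)) := (Real.exp_nat_mul _ _).symm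
    _ ≤ Real.exp (Real.log t) := Real.exp_le_exp.2 hmain
    _ = t := Real.exp_log ht

end Cayley

theorem expGrowth_linearDivergence_hasExpManyFatBigons_general
    {G : Type*} [Group G] (S : Set G)
    (hSfin : S.Finite) (hSgen : Subgroup.closure S = ⊤)
    (hgrowth : HasExpGrowth (cayleyGraph G S) 1)
    (C : ℝ) (hdiv : ∀ n : ℕ, DivLE (cayleyGraph G S) n (C * n)) :
    HasExpManyFatBigons (cayleyGraph G S) 1 := by
  have hc := cayleyGraph_connected hSgen
  have hdiv' (n : ℕ) : DivLE (cayleyGraph G S) n (max C 0 * n) :=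
    (hdiv n).mono (mul_le_mul_of_nonneg_right (le_max_left C 0) n.cast_nonneg)
  obtain ⟨a, ha, hlim⟩ := hgrowth
  have hℓ : 0 < Real.log a := Real.log_pos ha
  have hβ (N : ℕ) : 0 < ((gBall (cayleyGraph G S) 1 N).ncard : ℝ) :=
    Nat.cast_pos.2 (ncard_gBall_pos hc (cayleyGraph_neighborSet_finite hSfin) 1 N)
  obtain ⟨N₀, hN₀⟩ := (eventually_mul_le_log_and_log_le_mul hβ (by linarith)
    (r := 9 / 10 * Real.log a) (R := 11 / 10 * Real.log a) (by linarith) (by linarith)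
    hlim).exists_forall_of_atTop
  refine ⟨0, Real.exp (Real.log a / 4), 8 * (max C 0 + 1), le_rfl,
    Real.one_lt_exp_iff.2 (by positivity), by linarith [le_max_right C 0], fun s hs => ⟨s, hs, ?_⟩⟩
  exact (Set.Ici_infinite (N₀ + 16 * ⌈s⌉₊ + 76)).mono fun n hn =>
    exp_mul_le_ncard_bigonSet_inter_gBall hSfin hc (le_max_right C 0) hdiv' hℓ hN₀ hs
      (Nat.le_ceil s) hn

/-- (Proposition 1.2.) A finitely generated one-ended group with
exponential growth and linear divergence admits exponentially many fat bigons (in any of its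
Cayley graphs with respect to a finite symmetric generating set). -/
theorem expGrowth_linearDivergence_hasExpManyFatBigons
    {G : Type*} [Group G] (S : Set G)
    (hSfin : S.Finite) (hSsymm : S⁻¹ = S) (hSgen : Subgroup.closure S = ⊤)
    (hends : OneEnded (cayleyGraph G S))
    (hgrowth : HasExpGrowth (cayleyGraph G S) 1)
    (C : ℝ) (hdiv : ∀ n : ℕ, DivLE (cayleyGraph G S) n (C * n)) :
    HasExpManyFatBigons (cayleyGraph G S) 1 :=
  expGrowth_linearDivergence_hasExpManyFatBigons_general S hSfin hSgen hgrowth C hdiv
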